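/- arXiv:2403.02300 — 3 statements merged into one kernel-verified Lean document; each statement's English description precedes it below -/
import Mathlib

section
/- Let ε ∈ ℝ, T, U ⊆ ℝ measurable, δ = P_{y∼N(0,1)}[y ∈ U], Z = E_{x∼N(ε,1)}[1 − δ·1{x ∈ T}] > 0, and A(x,y) = φ(x−ε)φ(y)·1{(x,y) ∉ T×U}/Z. Let k be a positive integer and suppose: (i) for all integers 1 ≤ s ≤ k, E_{y∼N(0,1)}[y^s | y ∉ U] = E_{y∼N(0,1)}[y^s]; and (ii) for all integers 0 ≤ t ≤ k, E_{x∼N(ε,1)}[x^t (1 − δ·1{x∈T})]/Z = E_{x∼N(0,1)}[x^t]. Then for all nonnegative integers t, s with t + s ≤ k, the moment E_{(x,y)∼A}[x^t y^s] equals E_{x∼N(0,1)}[x^t]·E_{y∼N(0,1)}[y^s]. -/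
/-!
For fixed `x`, the indicator of `(T ×ˢ U)ᶜ` is `1` when `x ∉ T` and `Uᶜ.indicator 1` when `x ∈ T`.
By (i), and trivially for `s = 0`, the `s`-th moment of `φ` over `Uᶜ` is `(1 - δ) M_s`, where
`M_s = ∫ y ^ s φ(y)`, so the inner integral equals `x ^ t φ(x - ε) (1 - δ 1_T(x)) M_s / Z`;
by (ii) the outer integral of this is `M_t M_s`.
-/

open MeasureTheory Real

noncomputable def gaussPDF (z : ℝ) : ℝ := (Real.sqrt (2 * Real.pi))⁻¹ * Real.exp (-z ^ 2 / 2)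

open ProbabilityTheory

lemma gaussPDF_eq_gaussianPDFReal : gaussPDF = gaussianPDFReal 0 1 := by
  ext z
  simp [gaussPDF, gaussianPDFReal]

lemma integrable_gaussPDF : Integrable gaussPDF :=
  gaussPDF_eq_gaussianPDFReal ▸ integrable_gaussianPDFReal 0 1

lemma integral_gaussPDF : ∫ y, gaussPDF y = 1 := by
  rw [gaussPDF_eq_gaussianPDFReal, integral_gaussianPDFReal_eq_one 0 one_ne_zero]

open Classical in
lemma integral_mul_indicator_compl_prod {α β : Type*} [MeasurableSpace β] {μ : Measure β}
    (T : Set α) {U : Set β} (hU : MeasurableSet U) (x : α) (F : β → ℝ) :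
    ∫ y, F y * ((T ×ˢ U)ᶜ).indicator 1 (x, y) ∂μ
      = if x ∈ T then ∫ y in Uᶜ, F y ∂μ else ∫ y, F y ∂μ := by
  by_cases hx : x ∈ T
  · rw [if_pos hx, ← integral_indicator hU.compl]
    congr 1 with y
    by_cases hy : y ∈ U <;> simp [hx, hy]
  · simp [hx]

lemma setIntegral_compl_pow_mul_gaussPDF {U : Set ℝ} (hU : MeasurableSet U)
    (hU1 : ∫ y in U, gaussPDF y ≠ 1) {k : ℕ}
    (h1 : ∀ s : ℕ, 1 ≤ s → s ≤ k →
      (∫ y in Uᶜ, y ^ s * gaussPDF y) / (1 - ∫ y in U, gaussPDF y) = ∫ y, y ^ s * gaussPDF y)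
    {s : ℕ} (hs : s ≤ k) :
    ∫ y in Uᶜ, y ^ s * gaussPDF y = (1 - ∫ y in U, gaussPDF y) * ∫ y, y ^ s * gaussPDF y := by
  rcases Nat.eq_zero_or_pos s with rfl | hs0
  · simp only [pow_zero, one_mul, integral_gaussPDF, mul_one]
    rw [setIntegral_compl hU integrable_gaussPDF, integral_gaussPDF]
  · rw [← h1 s hs0 hs, mul_div_cancel₀ _ (sub_ne_zero.mpr hU1.symm)]

theorem stmt_4_general (ε : ℝ) (T U : Set ℝ) (hU : MeasurableSet U)
    (δ : ℝ) (hδdef : δ = ∫ y in U, gaussPDF y) (hδ1 : δ < 1)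
    (Z : ℝ) (hZ : 0 < Z) (k : ℕ)
    (h1 : ∀ s : ℕ, 1 ≤ s → s ≤ k →
      (∫ y in Uᶜ, y ^ s * gaussPDF y) / (1 - δ) = ∫ y, y ^ s * gaussPDF y)
    (h2 : ∀ t : ℕ, t ≤ k →
      (∫ x, x ^ t * (gaussPDF (x - ε) * (1 - δ * T.indicator 1 x))) / Z
        = ∫ x, x ^ t * gaussPDF x) :
    ∀ t s : ℕ, t + s ≤ k →
      (∫ x : ℝ, ∫ y : ℝ,
        x ^ t * y ^ s *
          (gaussPDF (x - ε) * gaussPDF y * ((T ×ˢ U)ᶜ).indicator 1 (x, y) / Z))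
      = (∫ x, x ^ t * gaussPDF x) * (∫ y, y ^ s * gaussPDF y) := by
  intro t s hts
  subst hδdef
  set M := ∫ y, y ^ s * gaussPDF y
  have hcompl := setIntegral_compl_pow_mul_gaussPDF hU hδ1.ne h1 (s := s) (by omega)
  have hinner (x : ℝ) : ∫ y, x ^ t * y ^ s *
        (gaussPDF (x - ε) * gaussPDF y * ((T ×ˢ U)ᶜ).indicator 1 (x, y) / Z)
      = x ^ t * (gaussPDF (x - ε) * (1 - (∫ y in U, gaussPDF y) * T.indicator 1 x)) * (M / Z) := by
    calc _ = ∫ y, x ^ t * gaussPDF (x - ε) / Z *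
          (y ^ s * gaussPDF y * ((T ×ˢ U)ᶜ).indicator 1 (x, y)) := by
          congr 1 with y; ring
      _ = _ := by
        rw [integral_const_mul, integral_mul_indicator_compl_prod T hU x]
        by_cases hx : x ∈ T <;> simp [hx, hcompl] <;> ring
  have hZM := h2 t (by omega)
  rw [div_eq_iff hZ.ne'] at hZM
  simp_rw [hinner]
  rw [integral_mul_const, hZM]
  field_simp

theorem stmt_4 (ε : ℝ) (T U : Set ℝ) (hT : MeasurableSet T) (hU : MeasurableSet U)
    (δ : ℝ) (hδdef : δ = ∫ y in U, gaussPDF y) (hδ0 : 0 < δ) (hδ1 : δ < 1)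
    (Z : ℝ) (hZdef : Z = ∫ x, gaussPDF (x - ε) * (1 - δ * T.indicator 1 x))
    (hZ : 0 < Z) (k : ℕ) (hk : 0 < k)
    (h1 : ∀ s : ℕ, 1 ≤ s → s ≤ k →
      (∫ y in Uᶜ, y ^ s * gaussPDF y) / (1 - δ) = ∫ y, y ^ s * gaussPDF y)
    (h2 : ∀ t : ℕ, t ≤ k →
      (∫ x, x ^ t * (gaussPDF (x - ε) * (1 - δ * T.indicator 1 x))) / Z
        = ∫ x, x ^ t * gaussPDF x) :
    ∀ t s : ℕ, t + s ≤ k →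
      (∫ x : ℝ, ∫ y : ℝ,
        x ^ t * y ^ s *
          (gaussPDF (x - ε) * gaussPDF y * ((T ×ˢ U)ᶜ).indicator 1 (x, y) / Z))
      = (∫ x, x ^ t * gaussPDF x) * (∫ y, y ^ s * gaussPDF y) :=
  stmt_4_general ε T U hU δ hδdef hδ1 Z hZ k h1 h2
end

section
/- Let k be a positive integer, D a continuous distribution on ℝ with finite moments up to order k−1, and ν₀,…,ν_{k−1} ∈ ℝ. Suppose that for every η > 0 there exists an at most (k+1)-piecewise constant function g_η: ℝ → {±1} with |E_{z∼D}[g_η(z) z^t] − ν_t| ≤ η for all nonnegative integers t < k. Then there exists an at most (k+1)-piecewise constant function f: ℝ → {±1} with E_{z∼D}[f(z) z^t] = ν_t exactly, for all nonnegative integers t < k. -/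
open MeasureTheory Real

/-- `f` is a piecewise constant function on `ℝ` with at most `m` pieces. -/
def PiecewiseConst (m : ℕ) (f : ℝ → ℝ) : Prop :=
  ∃ b : Fin (m + 1) → EReal, Monotone b ∧ b 0 = ⊥ ∧ b (Fin.last m) = ⊤ ∧
    ∀ i : Fin m, ∀ x y : ℝ,
      b i.castSucc < (x : EReal) → (x : EReal) < b i.succ →
      b i.castSucc < (y : EReal) → (y : EReal) < b i.succ → f x = f y

/-! A step function with `k + 1` pieces and values `±1` is determined by its breakpoints, a
monotone tuple in the compact space `EReal ^ (k + 2)`, and its values in the finite set `{1, -1}`.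
The map sending such a configuration to its first `k` moments is continuous, by dominated
convergence, since the breakpoints of the limit form a null set. Hence the set of attainable moment
vectors is compact, so closed, and the hypothesis says exactly that `ν` lies in its closure. -/

open Filter Topology Set

theorem exists_castSucc_lt_and_lt_succ {α : Type*} [LinearOrder α] {m : ℕ}
    {b : Fin (m + 1) → α} {x : α} (h0 : b 0 < x) (hlast : x < b (Fin.last m))
    (hne : ∀ j, b j ≠ x) : ∃ i : Fin m, b i.castSucc < x ∧ x < b i.succ := by
  have hex : ∃ j, x < b j := ⟨_, hlast⟩
  have hfirst : x < b (Fin.find _ hex) := Fin.find_spec hex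
  have hmin : ∀ {j}, j < Fin.find _ hex → ¬x < b j := Fin.find_min hex
  generalize Fin.find _ hex = j at hfirst hmin
  obtain ⟨i, rfl⟩ := Fin.exists_succ_eq.mpr (fun h : j = 0 => lt_asymm h0 (h ▸ hfirst))
  exact ⟨i, (not_lt.mp (hmin Fin.castSucc_lt_succ)).lt_of_ne (hne _), hfirst⟩

section StepFunction

variable {α : Type*} [LinearOrder α] {n : ℕ}

noncomputable def pieceIndex (b : Fin (n + 2) → α) (x : α) : Fin (n + 1) :=
  ({i | b i.castSucc < x} : Finset (Fin (n + 1))).sup id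

theorem monotone_pieceIndex (b : Fin (n + 2) → α) : Monotone (pieceIndex b) :=
  fun _ _ hxy => Finset.sup_mono fun i hi => by
    simp only [Finset.mem_filter_univ] at hi ⊢
    exact hi.trans_le hxy

theorem pieceIndex_eq {b : Fin (n + 2) → α} (hb : Monotone b) {i : Fin (n + 1)} {x : α}
    (h₁ : b i.castSucc < x) (h₂ : x < b i.succ) : pieceIndex b x = i := by
  refine le_antisymm (Finset.sup_le fun j hj => ?_)
    (Finset.le_sup (f := id) ((Finset.mem_filter_univ _).mpr h₁))
  by_contra! hij
  have hbj : b j.castSucc < x := by simpa using hj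
  exact lt_asymm hbj (h₂.trans_le (hb (Fin.castSucc_lt_iff_succ_le.mp hij)))

end StepFunction

def breakpoints (n : ℕ) : Set (Fin (n + 2) → EReal) :=
  {b | Monotone b ∧ b 0 = ⊥ ∧ b (Fin.last _) = ⊤}

section

variable {n : ℕ}

noncomputable def stepFun (b : Fin (n + 2) → EReal) (s : Fin (n + 1) → ℝ) (z : ℝ) : ℝ :=
  s (pieceIndex b z)

theorem measurable_stepFun (b : Fin (n + 2) → EReal) (s : Fin (n + 1) → ℝ) :
    Measurable (stepFun b s) :=
  measurable_of_finite s |>.comp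
    ((monotone_pieceIndex b).comp EReal.coe_strictMono.monotone).measurable

theorem stepFun_eq {b : Fin (n + 2) → EReal} (hb : Monotone b) (s : Fin (n + 1) → ℝ)
    {i : Fin (n + 1)} {z : ℝ} (h₁ : b i.castSucc < z) (h₂ : (z : EReal) < b i.succ) :
    stepFun b s z = s i := by
  rw [stepFun, pieceIndex_eq hb h₁ h₂]

theorem isCompact_breakpoints : IsCompact (breakpoints n) :=
  (isClosed_monotone.inter ((isClosed_eq (continuous_apply 0) continuous_const).inter
    (isClosed_eq (continuous_apply _) continuous_const))).isCompact

theorem piecewiseConst_stepFun {b : Fin (n + 2) → EReal} (hb : b ∈ breakpoints n)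
    (s : Fin (n + 1) → ℝ) : PiecewiseConst (n + 1) (stepFun b s) :=
  ⟨b, hb.1, hb.2.1, hb.2.2, fun i _ _ hx₁ hx₂ hy₁ hy₂ => by
    rw [stepFun_eq hb.1 s hx₁ hx₂, stepFun_eq hb.1 s hy₁ hy₂]⟩

-- The exceptional set is the finite, hence null, set of real breakpoints.
theorem ae_exists_mem_piece (μ : Measure ℝ) [NullSingletonClass μ] {b : Fin (n + 2) → EReal}
    (hb : b ∈ breakpoints n) :
    ∀ᵐ z : ℝ ∂μ, ∃ i : Fin (n + 1), b i.castSucc < z ∧ (z : EReal) < b i.succ := by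
  have hfin : (⋃ j, {z : ℝ | (z : EReal) = b j}).Finite :=
    finite_iUnion fun j => Subsingleton.finite fun x hx y hy =>
      EReal.coe_injective (hx.trans hy.symm)
  filter_upwards [hfin.countable.ae_notMem μ] with z hz
  refine exists_castSucc_lt_and_lt_succ ?_ ?_ fun j hj => hz (mem_iUnion.mpr ⟨j, hj.symm⟩)
  · simp [hb.2.1]
  · simp [hb.2.2]

theorem exists_stepFun_ae_eq (μ : Measure ℝ) [NullSingletonClass μ] {S : Set ℝ}
    {g : ℝ → ℝ} (hg : PiecewiseConst (n + 1) g) (hgS : ∀ z, g z ∈ S) :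
    ∃ b ∈ breakpoints n, ∃ s ∈ univ.pi fun _ => S, g =ᵐ[μ] stepFun b s := by
  classical
  obtain ⟨b, hb, hb0, hblast, hconst⟩ := hg
  let s : Fin (n + 1) → ℝ := fun i =>
    if h : ∃ z : ℝ, b i.castSucc < z ∧ (z : EReal) < b i.succ then g h.choose else g 0
  refine ⟨b, ⟨hb, hb0, hblast⟩, s, fun i _ => by dsimp only [s]; split_ifs <;> apply hgS,
    ?_⟩
  filter_upwards [ae_exists_mem_piece μ ⟨hb, hb0, hblast⟩] with z ⟨i, hz₁, hz₂⟩
  have hex : ∃ z : ℝ, b i.castSucc < z ∧ (z : EReal) < b i.succ := ⟨z, hz₁, hz₂⟩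
  rw [stepFun_eq hb s hz₁ hz₂, show s i = g hex.choose from dif_pos hex]
  exact hconst i _ _ hz₁ hz₂ hex.choose_spec.1 hex.choose_spec.2

/-- Away from the breakpoints of the limit configuration, nearby step functions agree on the piece
containing `z`, so the integrals converge by dominated convergence. -/
theorem continuousOn_integral_stepFun_mul (μ : Measure ℝ) [NullSingletonClass μ] {S : Set ℝ}
    (hS : Bornology.IsBounded S) {w : ℝ → ℝ} (hw : Integrable w μ) :
    ContinuousOn (fun x : (Fin (n + 2) → EReal) × (Fin (n + 1) → ℝ) =>
      ∫ z, stepFun x.1 x.2 z * w z ∂μ) (breakpoints n ×ˢ univ.pi fun _ => S) := by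
  intro x hx
  obtain ⟨R, hR⟩ := hS.exists_norm_le
  refine tendsto_integral_filter_of_dominated_convergence (fun z => R * ‖w z‖) ?_ ?_
    (hw.norm.const_mul R) ?_
  · exact Eventually.of_forall fun y =>
      (measurable_stepFun y.1 y.2).aestronglyMeasurable.mul hw.aestronglyMeasurable
  · filter_upwards [self_mem_nhdsWithin] with y hy
    refine Eventually.of_forall fun z => ?_
    rw [norm_mul]
    exact mul_le_mul_of_nonneg_right (hR _ (hy.2 _ (mem_univ _))) (norm_nonneg _)
  · filter_upwards [ae_exists_mem_piece μ hx.1] with z ⟨i, hz₁, hz₂⟩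
    have hnear : ∀ᶠ y in 𝓝[breakpoints n ×ˢ univ.pi fun _ => S] x,
        stepFun y.1 y.2 z * w z = y.2 i * w z := by
      have hopen₁ : ∀ᶠ y in 𝓝 x, y.1 i.castSucc < (z : EReal) :=
        ((continuous_apply _).comp continuous_fst).continuousAt.eventually_lt
          continuousAt_const hz₁
      have hopen₂ : ∀ᶠ y in 𝓝 x, (z : EReal) < y.1 i.succ :=
        continuousAt_const.eventually_lt
          ((continuous_apply _).comp continuous_fst).continuousAt hz₂
      filter_upwards [self_mem_nhdsWithin, nhdsWithin_le_nhds hopen₁, nhdsWithin_le_nhds hopen₂]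
        with y hy hy₁ hy₂
      rw [stepFun_eq hy.1.1 _ hy₁ hy₂]
    rw [stepFun_eq hx.1.1 _ hz₁ hz₂]
    refine Tendsto.congr' (EventuallyEq.symm hnear) (Tendsto.mul_const _ ?_)
    exact ((continuous_apply i).comp continuous_snd).continuousWithinAt

end

theorem stmt_12_general (k : ℕ) (p : ℝ → ℝ)
    (hp_mom : ∀ t : ℕ, t < k → Integrable (fun z : ℝ => z ^ t * p z))
    (ν : ℕ → ℝ)
    (h : ∀ η : ℝ, 0 < η → ∃ g : ℝ → ℝ, PiecewiseConst (k + 1) g ∧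
      (∀ z, g z = 1 ∨ g z = -1) ∧
      ∀ t : ℕ, t < k → |(∫ z, g z * z ^ t * p z) - ν t| ≤ η) :
    ∃ f : ℝ → ℝ, PiecewiseConst (k + 1) f ∧ (∀ z, f z = 1 ∨ f z = -1) ∧
      ∀ t : ℕ, t < k → (∫ z, f z * z ^ t * p z) = ν t := by
  let S : Set ℝ := {1, -1}
  have hS : IsCompact S := S.toFinite.isCompact
  let C := breakpoints k ×ˢ univ.pi fun _ : Fin (k + 1) => S
  let moments (x : (Fin (k + 2) → EReal) × (Fin (k + 1) → ℝ)) (t : Fin k) : ℝ :=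
    ∫ z, stepFun x.1 x.2 z * (z ^ (t : ℕ) * p z)
  have hclosed : IsClosed (moments '' C) :=
    ((isCompact_breakpoints.prod (isCompact_univ_pi fun _ => hS)).image_of_continuousOn
      (continuousOn_pi.2 fun t : Fin k =>
        continuousOn_integral_stepFun_mul volume hS.isBounded (hp_mom t t.isLt))).isClosed
  have hν : (fun t : Fin k => ν t) ∈ closure (moments '' C) := by
    refine Metric.mem_closure_iff.2 fun η hη => ?_
    obtain ⟨g, hg, hgS, hgν⟩ := h (η / 2) (half_pos hη)
    obtain ⟨b, hb, s, hs, hgs⟩ := exists_stepFun_ae_eq volume (S := S) hg hgS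
    refine ⟨moments (b, s), mem_image_of_mem _ ⟨hb, hs⟩,
      ((dist_pi_le_iff (half_pos hη).le).2 fun t => ?_).trans_lt (half_lt_self hη)⟩
    rw [Real.dist_eq, abs_sub_comm]
    convert hgν t t.isLt using 3
    exact integral_congr_ae (hgs.mono fun z hz => by simp only [hz, mul_assoc])
  obtain ⟨⟨b, s⟩, ⟨hb, hs⟩, hmoments⟩ := hclosed.closure_eq ▸ hν
  refine ⟨stepFun b s, piecewiseConst_stepFun hb s, fun z => hs _ (mem_univ _), fun t ht => ?_⟩
  simpa only [mul_assoc] using congrFun hmoments ⟨t, ht⟩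

theorem stmt_12 (k : ℕ) (hk : 0 < k) (p : ℝ → ℝ)
    (hp_cont : Continuous p) (hp_nonneg : ∀ z, 0 ≤ p z) (hp_mass : ∫ z, p z = 1)
    (hp_mom : ∀ t : ℕ, t < k → Integrable (fun z : ℝ => z ^ t * p z))
    (ν : ℕ → ℝ)
    (h : ∀ η : ℝ, 0 < η → ∃ g : ℝ → ℝ, PiecewiseConst (k + 1) g ∧
      (∀ z, g z = 1 ∨ g z = -1) ∧
      ∀ t : ℕ, t < k → |(∫ z, g z * z ^ t * p z) - ν t| ≤ η) :
    ∃ f : ℝ → ℝ, PiecewiseConst (k + 1) f ∧ (∀ z, f z = 1 ∨ f z = -1) ∧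
      ∀ t : ℕ, t < k → (∫ z, f z * z ^ t * p z) = ν t :=
  stmt_12_general k p hp_mom ν h
end

section
/- Let D₀ be a fixed distribution, 𝒟 a family of distributions, and suppose there exist s distributions D₁,…,D_s ∈ 𝒟 that are (γ,β)-correlated relative to D₀, i.e., |χ_{D₀}(D_i, D_j)| ≤ γ for i ≠ j and ≤ β for i = j. Then for any γ' > 0, any SQ algorithm that distinguishes D₀ from 𝒟 (decision problem ℬ(𝒟, D₀)) either makes at least s·γ'/(β−γ) queries or makes some query to STAT(τ) with τ ≤ √(γ + γ'). -/
/-!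
For a fixed query `f` with `|f| ≤ 1`, let `B` be the set of alternatives `Dᵢ` whose answer
deviates from that of `D₀` by at least `τ`. With signs `εᵢ = sign(E_{Dᵢ} f - E_{D₀} f)` and
`S = ∑_{i ∈ B} εᵢ (Dᵢ - D₀)`, one gets `|B| τ ≤ ∫ f S ≤ ∫ |S|`, while Cauchy–Schwarz against
`D₀` gives `(∫ |S|)² ≤ ∫ S² / D₀ = ∑_{i,i' ∈ B} εᵢ εᵢ' χ(Dᵢ, Dᵢ') ≤ |B| (β - γ) + |B|² γ`.
Hence `|B| (τ² - γ) ≤ β - γ`, so when `τ² ≥ γ + γ'` each query rules out at most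
`(β - γ) / γ'` alternatives, and fewer than `s γ' / (β - γ)` queries cannot rule out all `s`.
-/

open MeasureTheory Finset

section DensityRatio

variable {α : Type*} [MeasurableSpace α] {μ : Measure α}

lemma sub_mul_sub_div_eq {p q r : ℝ} (hr : r ≠ 0) :
    (p - r) * (q - r) / r = p * q / r - p - q + r := by
  field_simp
  ring

lemma integrable_sub_mul_sub_div {p q r : α → ℝ} (hr : ∀ x, r x ≠ 0)
    (hp : Integrable p μ) (hq : Integrable q μ) (hr_int : Integrable r μ)
    (hpq : Integrable (fun x => p x * q x / r x) μ) :
    Integrable (fun x => (p x - r x) * (q x - r x) / r x) μ := by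
  simp_rw [sub_mul_sub_div_eq (hr _)]
  exact ((hpq.sub hp).sub hq).add hr_int

lemma integral_sub_mul_sub_div {p q r : α → ℝ} (hr : ∀ x, r x ≠ 0)
    (hp : ∫ x, p x ∂μ = 1) (hq : ∫ x, q x ∂μ = 1) (hr1 : ∫ x, r x ∂μ = 1)
    (hpq : Integrable (fun x => p x * q x / r x) μ) :
    ∫ x, (p x - r x) * (q x - r x) / r x ∂μ = (∫ x, p x * q x / r x ∂μ) - 1 := by
  have hp_int := Integrable.of_integral_ne_zero (hp ▸ one_ne_zero)
  have hq_int := Integrable.of_integral_ne_zero (hq ▸ one_ne_zero)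
  have hr_int := Integrable.of_integral_ne_zero (hr1 ▸ one_ne_zero)
  simp_rw [sub_mul_sub_div_eq (hr _)]
  rw [integral_add _ hr_int, integral_sub _ hq_int, integral_sub hpq hp_int, hp, hq, hr1]
  · ring
  · exact hpq.sub hp_int
  · exact (hpq.sub hp_int).sub hq_int

-- Cauchy–Schwarz against the density `r`, from `0 ≤ ∫ (|g| - c r)² / r` with `c = ∫ |g|`.
lemma sq_integral_abs_le_integral_sq_div {g r : α → ℝ} (hr : ∀ x, 0 < r x)
    (hr1 : ∫ x, r x ∂μ = 1) (hg : Integrable g μ)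
    (hg2 : Integrable (fun x => g x ^ 2 / r x) μ) :
    (∫ x, |g x| ∂μ) ^ 2 ≤ ∫ x, g x ^ 2 / r x ∂μ := by
  set c := ∫ x, |g x| ∂μ
  have hr_int := Integrable.of_integral_ne_zero (hr1 ▸ one_ne_zero)
  have hexpand : ∀ x, (|g x| - c * r x) ^ 2 / r x = g x ^ 2 / r x - 2 * c * |g x| + c ^ 2 * r x :=
    fun x => by
      field_simp [(hr x).ne']
      rw [← sq_abs (g x)]
      ring
  have hnonneg : 0 ≤ ∫ x, (|g x| - c * r x) ^ 2 / r x ∂μ :=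
    integral_nonneg fun x => div_nonneg (sq_nonneg _) (hr x).le
  have hcg : Integrable (fun x => 2 * c * |g x|) μ := hg.abs.const_mul _
  simp_rw [hexpand] at hnonneg
  rw [integral_add (by exact hg2.sub hcg) (hr_int.const_mul _), integral_sub hg2 hcg,
    integral_const_mul, integral_const_mul, hr1] at hnonneg
  linarith

lemma integral_mul_le_integral_abs {f g : α → ℝ} (hf : AEStronglyMeasurable f μ)
    (hf1 : ∀ x, |f x| ≤ 1) (hg : Integrable g μ) :
    ∫ x, f x * g x ∂μ ≤ ∫ x, |g x| ∂μ :=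
  integral_mono (hg.bdd_mul hf (Filter.Eventually.of_forall hf1)) hg.abs fun x =>
    (le_abs_self _).trans (by
      rw [abs_mul]
      exact mul_le_of_le_one_left (abs_nonneg _) (hf1 x))

end DensityRatio

lemma sum_sum_mul_mul_le {ι : Type*} (B : Finset ι) (ε : ι → ℝ) (hε : ∀ i, |ε i| ≤ 1)
    (a : ι → ι → ℝ) {γ β : ℝ} (hcross : ∀ i j, i ≠ j → |a i j| ≤ γ) (hdiag : ∀ i, |a i i| ≤ β) :
    ∑ i ∈ B, ∑ j ∈ B, ε i * ε j * a i j ≤ #B * (β - γ) + #B ^ 2 * γ := by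
  classical
  have hterm : ∀ i j, ε i * ε j * a i j ≤ γ + if i = j then β - γ else 0 := by
    intro i j
    have hεε : |ε i * ε j| ≤ 1 := by
      rw [abs_mul]
      exact mul_le_one₀ (hε i) (abs_nonneg _) (hε j)
    have ha : ε i * ε j * a i j ≤ |a i j| :=
      (le_abs_self _).trans (by
        rw [abs_mul]
        exact mul_le_of_le_one_left (abs_nonneg _) hεε)
    split_ifs with h
    · subst h; linarith [hdiag i]
    · linarith [hcross i j h]
  calc ∑ i ∈ B, ∑ j ∈ B, ε i * ε j * a i j
      ≤ ∑ i ∈ B, ∑ j ∈ B, (γ + if i = j then β - γ else 0) :=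
        sum_le_sum fun i _ => sum_le_sum fun j _ => hterm i j
    _ = #B * (β - γ) + #B ^ 2 * γ := by
        simp only [sum_add_distrib, sum_const, nsmul_eq_mul, sum_ite_eq, sum_ite_mem, inter_self]
        ring

lemma sq_sum_mul_div_eq {ι : Type*} (B : Finset ι) (ε v : ι → ℝ) (c : ℝ) :
    (∑ i ∈ B, ε i * v i) ^ 2 / c = ∑ i ∈ B, ∑ j ∈ B, ε i * ε j * (v i * v j / c) := by
  rw [sq, sum_mul_sum, sum_div]
  refine sum_congr rfl fun i _ => ?_
  rw [sum_div]
  refine sum_congr rfl fun j _ => ?_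
  ring

section SignedSum

variable {α ι : Type*} [MeasurableSpace α] {μ : Measure α} {r : α → ℝ} {p : ι → α → ℝ}

lemma integrable_sq_sum_mul_sub_div (hr : ∀ x, r x ≠ 0) (hp : ∀ i, Integrable (p i) μ)
    (hr_int : Integrable r μ) (hpp : ∀ i j, Integrable (fun x => p i x * p j x / r x) μ)
    (B : Finset ι) (ε : ι → ℝ) :
    Integrable (fun x => (∑ i ∈ B, ε i * (p i x - r x)) ^ 2 / r x) μ := by
  simp_rw [sq_sum_mul_div_eq]
  exact integrable_finsetSum _ fun i _ => integrable_finsetSum _ fun j _ =>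
    (integrable_sub_mul_sub_div hr (hp i) (hp j) hr_int (hpp i j)).const_mul _

lemma integral_sq_sum_mul_sub_div (hr : ∀ x, r x ≠ 0) (hp : ∀ i, ∫ x, p i x ∂μ = 1)
    (hr1 : ∫ x, r x ∂μ = 1) (hpp : ∀ i j, Integrable (fun x => p i x * p j x / r x) μ)
    (B : Finset ι) (ε : ι → ℝ) :
    ∫ x, (∑ i ∈ B, ε i * (p i x - r x)) ^ 2 / r x ∂μ =
      ∑ i ∈ B, ∑ j ∈ B, ε i * ε j * ((∫ x, p i x * p j x / r x ∂μ) - 1) := by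
  have hp_int i := Integrable.of_integral_ne_zero ((hp i) ▸ one_ne_zero)
  have hr_int := Integrable.of_integral_ne_zero (hr1 ▸ one_ne_zero)
  have hker i j := integrable_sub_mul_sub_div hr (hp_int i) (hp_int j) hr_int (hpp i j)
  simp_rw [sq_sum_mul_div_eq]
  rw [integral_finsetSum _ fun i _ => integrable_finsetSum _ fun j _ => (hker i j).const_mul _]
  refine sum_congr rfl fun i _ => ?_
  rw [integral_finsetSum _ fun j _ => (hker i j).const_mul _]
  refine sum_congr rfl fun j _ => ?_
  rw [integral_const_mul, integral_sub_mul_sub_div hr (hp i) (hp j) hr1 (hpp i j)]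

lemma integral_mul_sum_mul_sub {f : α → ℝ} (hf : AEStronglyMeasurable f μ)
    (hf1 : ∀ x, |f x| ≤ 1) (hp : ∀ i, Integrable (p i) μ) (hr_int : Integrable r μ)
    (B : Finset ι) (ε : ι → ℝ) :
    ∫ x, f x * ∑ i ∈ B, ε i * (p i x - r x) ∂μ =
      ∑ i ∈ B, ε i * ((∫ x, f x * p i x ∂μ) - ∫ x, f x * r x ∂μ) := by
  have hf_bdd : ∀ᵐ x ∂μ, ‖f x‖ ≤ 1 := Filter.Eventually.of_forall hf1
  have hfp i : Integrable (fun x => f x * p i x) μ := (hp i).bdd_mul hf hf_bdd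
  have hfr : Integrable (fun x => f x * r x) μ := hr_int.bdd_mul hf hf_bdd
  have hterm i x : f x * (ε i * (p i x - r x)) = ε i * (f x * p i x - f x * r x) := by ring
  simp_rw [mul_sum, hterm]
  rw [integral_finsetSum _ fun i _ => by exact ((hfp i).sub hfr).const_mul _]
  refine sum_congr rfl fun i _ => ?_
  rw [integral_const_mul, integral_sub (hfp i) hfr]

lemma card_mul_sq_sub_le {γ β τ : ℝ} (hr : ∀ x, 0 < r x) (hr1 : ∫ x, r x ∂μ = 1)
    (hp : ∀ i, ∫ x, p i x ∂μ = 1) (hpp : ∀ i j, Integrable (fun x => p i x * p j x / r x) μ)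
    (hcross : ∀ i j, i ≠ j → |(∫ x, p i x * p j x / r x ∂μ) - 1| ≤ γ)
    (hdiag : ∀ i, |(∫ x, p i x * p i x / r x ∂μ) - 1| ≤ β) (hγβ : γ ≤ β) (hτ : 0 ≤ τ)
    {f : α → ℝ} (hf : AEStronglyMeasurable f μ) (hf1 : ∀ x, |f x| ≤ 1) (B : Finset ι)
    (hB : ∀ i ∈ B, τ ≤ |(∫ x, f x * p i x ∂μ) - ∫ x, f x * r x ∂μ|) :
    #B * (τ ^ 2 - γ) ≤ β - γ := by
  have hr0 x := (hr x).ne'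
  have hp_int i := Integrable.of_integral_ne_zero ((hp i) ▸ one_ne_zero)
  have hr_int := Integrable.of_integral_ne_zero (hr1 ▸ one_ne_zero)
  set d : ι → ℝ := fun i => (∫ x, f x * p i x ∂μ) - ∫ x, f x * r x ∂μ
  set ε : ι → ℝ := fun i => SignType.sign (d i)
  have hε i : |ε i| ≤ 1 := by
    change |(SignType.sign (d i) : ℝ)| ≤ 1
    cases SignType.sign (d i) <;> simp
  set S : α → ℝ := fun x => ∑ i ∈ B, ε i * (p i x - r x)
  have hS : Integrable S μ :=
    integrable_finsetSum _ fun i _ => ((hp_int i).sub hr_int).const_mul _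
  have hfS : ∫ x, f x * S x ∂μ = ∑ i ∈ B, |d i| := by
    rw [integral_mul_sum_mul_sub hf hf1 hp_int hr_int]
    exact sum_congr rfl fun i _ => sign_mul_self (d i)
  have hlow : #B * τ ≤ ∫ x, |S x| ∂μ :=
    calc #B * τ = ∑ i ∈ B, τ := by rw [sum_const, nsmul_eq_mul]
      _ ≤ ∑ i ∈ B, |d i| := sum_le_sum hB
      _ = ∫ x, f x * S x ∂μ := hfS.symm
      _ ≤ ∫ x, |S x| ∂μ := integral_mul_le_integral_abs hf hf1 hS
  have hup : (∫ x, |S x| ∂μ) ^ 2 ≤ #B * (β - γ) + #B ^ 2 * γ := by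
    refine (sq_integral_abs_le_integral_sq_div hr hr1 hS
      (integrable_sq_sum_mul_sub_div hr0 hp_int hr_int hpp B ε)).trans ?_
    rw [integral_sq_sum_mul_sub_div hr0 hp hr1 hpp]
    exact sum_sum_mul_mul_le B ε hε _ hcross hdiag
  have hsq : (#B * τ) ^ 2 ≤ #B * (β - γ) + #B ^ 2 * γ :=
    (pow_le_pow_left₀ (by positivity) hlow 2).trans hup
  rcases (#B).eq_zero_or_pos with hB0 | hBpos
  · simpa [hB0] using hγβ
  · have hn : (0 : ℝ) < #B := by exact_mod_cast hBpos
    exact le_of_mul_le_mul_left (by nlinarith) hn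

end SignedSum

lemma exists_forall_notMem_of_sum_card_lt {ι κ : Type*} [Fintype ι] [DecidableEq ι]
    (t : Finset κ) (B : κ → Finset ι) (h : ∑ j ∈ t, #(B j) < Fintype.card ι) :
    ∃ i, ∀ j ∈ t, i ∉ B j := by
  obtain ⟨i, -, hi⟩ := exists_mem_notMem_of_card_lt_card (s := t.biUnion B) (t := univ)
    (card_biUnion_le.trans_lt (by rwa [card_univ]))
  exact ⟨i, fun j hj hij => hi (mem_biUnion.mpr ⟨j, hj, hij⟩)⟩

theorem stmt_16_general (dim s q : ℕ) (γ β γ' τ : ℝ) (hγβ : γ < β) (hγ' : 0 < γ')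
    (D0 : (Fin dim → ℝ) → ℝ) (D : Fin s → (Fin dim → ℝ) → ℝ)
    (hD0_pos : ∀ x, 0 < D0 x) (hD0_mass : ∫ x, D0 x = 1)
    (hD_mass : ∀ i, ∫ x, D i x = 1)
    (hInt : ∀ i j, Integrable (fun x => D i x * D j x / D0 x))
    (hcross : ∀ i j, i ≠ j → |(∫ x, D i x * D j x / D0 x) - 1| ≤ γ)
    (hdiag : ∀ i, |(∫ x, D i x * D i x / D0 x) - 1| ≤ β)
    (F : Fin q → (Fin dim → ℝ) → ℝ)
    (hF_meas : ∀ j, Measurable (F j)) (hF_bdd : ∀ j x, |F j x| ≤ 1)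
    (hτ : Real.sqrt (γ + γ') ≤ τ)
    (hq : (q : ℝ) < (s : ℝ) * γ' / (β - γ)) :
    ∃ i : Fin s, ∀ j : Fin q,
      |(∫ x, F j x * D i x) - (∫ x, F j x * D0 x)| ≤ τ := by
  obtain ⟨hτ0, hτ2⟩ := Real.sqrt_le_iff.mp hτ
  set bad : Fin q → Finset (Fin s) :=
    fun j => {i | τ < |(∫ x, F j x * D i x) - (∫ x, F j x * D0 x)|}
  have hbad j : (#(bad j) : ℝ) * γ' ≤ β - γ :=
    (mul_le_mul_of_nonneg_left (by linarith) (Nat.cast_nonneg _)).trans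
      (card_mul_sq_sub_le hD0_pos hD0_mass hD_mass hInt hcross hdiag hγβ.le hτ0
        (hF_meas j).aestronglyMeasurable (hF_bdd j) (bad j)
        fun i hi => (mem_filter.mp hi).2.le)
  have hsum : ∑ j, #(bad j) < s := by
    have hq' : (q : ℝ) * (β - γ) < s * γ' := (lt_div_iff₀ (by linarith)).mp hq
    have hmul : (∑ j, (#(bad j) : ℝ)) * γ' < s * γ' :=
      calc (∑ j, (#(bad j) : ℝ)) * γ' ≤ ∑ _j : Fin q, (β - γ) := by
            rw [sum_mul]; exact sum_le_sum fun j _ => hbad j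
        _ < s * γ' := by rwa [sum_const, card_univ, Fintype.card_fin, nsmul_eq_mul]
    exact_mod_cast lt_of_mul_lt_mul_right hmul hγ'.le
  obtain ⟨i, hi⟩ := exists_forall_notMem_of_sum_card_lt univ bad (by simpa using hsum)
  exact ⟨i, fun j => not_lt.mp fun h => hi j (mem_univ j) (by simp [bad, h])⟩

/-- SQ lower bound from pairwise correlations (adversarial form):
if `D 1, …, D s` are `(γ, β)`-correlated densities relative to the null density `D0`
(all relative to Lebesgue measure on `ℝᵈ`), and an algorithm asks fewer than
`s * γ' / (β - γ)` statistical queries, each bounded by 1 in absolute value and each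
answered within tolerance `τ ≥ √(γ + γ')`, then there is some alternative
distribution `D i` all of whose query answers are within `τ` of those of `D0`;
hence the algorithm cannot distinguish `D0` from the family. -/
theorem stmt_16 (dim s q : ℕ) (γ β γ' τ : ℝ) (hγ : 0 ≤ γ) (hγβ : γ < β) (hγ' : 0 < γ')
    (D0 : (Fin dim → ℝ) → ℝ) (D : Fin s → (Fin dim → ℝ) → ℝ)
    (hD0_pos : ∀ x, 0 < D0 x) (hD0_meas : Measurable D0) (hD0_mass : ∫ x, D0 x = 1)
    (hD_nonneg : ∀ i x, 0 ≤ D i x) (hD_meas : ∀ i, Measurable (D i))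
    (hD_mass : ∀ i, ∫ x, D i x = 1)
    (hInt : ∀ i j, Integrable (fun x => D i x * D j x / D0 x))
    (hcross : ∀ i j, i ≠ j → |(∫ x, D i x * D j x / D0 x) - 1| ≤ γ)
    (hdiag : ∀ i, |(∫ x, D i x * D i x / D0 x) - 1| ≤ β)
    (F : Fin q → (Fin dim → ℝ) → ℝ)
    (hF_meas : ∀ j, Measurable (F j)) (hF_bdd : ∀ j x, |F j x| ≤ 1)
    (hτ : Real.sqrt (γ + γ') ≤ τ)
    (hq : (q : ℝ) < (s : ℝ) * γ' / (β - γ)) :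
    ∃ i : Fin s, ∀ j : Fin q,
      |(∫ x, F j x * D i x) - (∫ x, F j x * D0 x)| ≤ τ :=
  stmt_16_general dim s q γ β γ' τ hγβ hγ' D0 D hD0_pos hD0_mass hD_mass hInt hcross hdiag F hF_meas
    hF_bdd hτ hq
end
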